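/- Let G be a triangle-free simple graph with maximum degree at most 4 containing a 5-cycle x–y–z–u–v–x on five distinct vertices, where x, z, v have degree exactly 3 and y, u have degree exactly 4. Let x₁, z₁, v₁ be the third neighbors (off the cycle) of x, z, v respectively, and suppose x₁ and v₁ have degree exactly 4 with x₁ ≠ v₁, while z₁ has degree exactly 3. Set S = {x, y, z, u, v, z₁}. If the S-reduced graph G*S admits a 2-PCF 9-coloring, then G admits a 2-PCF 9-coloring. (This is the reduction showing that on a 5-cycle with three 3-vertices in a vertex-minimum counterexample, every 3-vertex has a 4-neighbor off the cycle.) -/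

import Mathlib

/-- An `h`-PCF coloring of `G`: a proper coloring `φ` such that for every vertex `v`,
at least `min h (d_G(v))` colors appear on exactly one neighbor of `v`. -/
def SimpleGraph.IsPCFColoring {V α : Type*} (G : SimpleGraph V) (h : ℕ)
    (φ : V → α) : Prop :=
  (∀ ⦃u w : V⦄, G.Adj u w → φ u ≠ φ w) ∧
  ∀ v : V, min h {u | G.Adj v u}.ncard ≤
    {c : α | {u | G.Adj v u ∧ φ u = c}.ncard = 1}.ncard

/-- `G` admits an `h`-PCF `k`-coloring. -/
def SimpleGraph.HasPCFColoring {V : Type*} (G : SimpleGraph V) (h k : ℕ) : Prop :=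
  ∃ φ : V → Fin k, G.IsPCFColoring h φ

/-- The `S`-reduced graph `G*S`: delete `S`, and join two distinct nonadjacent
vertices outside `S` that have a common neighbor in `S` (vertices of `S`
remain as isolated vertices). -/
def SimpleGraph.reduce {V : Type*} (G : SimpleGraph V) (S : Set V) :
    SimpleGraph V where
  Adj u w := u ∉ S ∧ w ∉ S ∧ u ≠ w ∧
    (G.Adj u w ∨ ∃ s ∈ S, G.Adj u s ∧ G.Adj s w)
  symm := ⟨by
    rintro u w ⟨hu, hw, hne, h | ⟨s, hs, h1, h2⟩⟩
    · exact ⟨hw, hu, hne.symm, Or.inl h.symm⟩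
    · exact ⟨hw, hu, hne.symm, Or.inr ⟨s, hs, h2.symm, h1.symm⟩⟩⟩
  loopless := ⟨fun u h => h.2.2.1 rfl⟩

/-!
Keep the colouring `φ` of `G*S` off `S = {x, y, z, u, v, z₁}` and colour `z₁, u, y, z, v, x`
greedily, each against at most 8 forbidden colours out of 9. Besides properness and two unique
colours at the vertices of `S`, the forbidden colours protect the outside neighbours `w` of `S`:
a vertex of `S` next to `w` avoids the colours of the outside neighbours of `w` when these show at
most two colours, and the neighbours of `w` in `S` get distinct colours, except possibly `v` and
`z₁` when `w = v₁` sees two distinct colours outside `S` (which are then unique).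

If `w` has a single neighbour `t` in `S`, its neighbourhood in `G*S` consists of its outside
neighbours and at most the other outside neighbour of `t`, so the 2-PCF condition in `G*S` leaves
a unique colour among the outside neighbours of `w`, and the colour of `t` adds a second one. If
`w` has at least two neighbours in `S`, it has at most two outside neighbours, and the unique
colours of its neighbours in `S` and outside `S` add up.
-/

open Set

theorem Set.exists_notMem_of_ncard_lt {α : Type*} [Finite α] {s : Set α}
    (h : s.ncard < Nat.card α) : ∃ γ, γ ∉ s := by
  by_contra! hs
  rw [eq_univ_of_forall hs, ncard_univ] at h
  exact lt_irrefl _ h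

theorem Set.exists_notMem_and_mem_or_subset {α : Type*} [Finite α] {E F : Set α}
    (h : F.ncard < Nat.card α) : ∃ γ ∉ F, γ ∈ E ∨ E ⊆ F := by
  by_cases hEF : E ⊆ F
  · obtain ⟨γ, hγ⟩ := exists_notMem_of_ncard_lt h
    exact ⟨γ, hγ, Or.inr hEF⟩
  · obtain ⟨γ, hγE, hγF⟩ := not_subset.1 hEF
    exact ⟨γ, hγF, Or.inl hγE⟩

theorem Set.eq_triple_of_ncard_eq_three {α : Type*} {s : Set α} {a b c : α} (hs : s.ncard = 3)
    (ha : a ∈ s) (hb : b ∈ s) (hc : c ∈ s) (hab : a ≠ b) (hac : a ≠ c) (hbc : b ≠ c) :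
    s = {a, b, c} := by
  refine (eq_of_subset_of_ncard_le ?_ ?_ (finite_of_ncard_ne_zero (by omega))).symm
  · rintro _ (rfl | rfl | rfl) <;> assumption
  · rw [hs, ncard_eq_three.2 ⟨a, b, c, hab, hac, hbc, rfl⟩]

theorem Set.exists_eq_union_pair_of_ncard_eq {α : Type*} {s t : Set α} (hts : t ⊆ s)
    (ht : t.Finite) (h : s.ncard = t.ncard + 2) :
    ∃ a b, a ≠ b ∧ a ∉ t ∧ b ∉ t ∧ s = t ∪ {a, b} := by
  obtain ⟨a, b, hab, hst⟩ :=
    ncard_eq_two.1 (show (s \ t).ncard = 2 by rw [ncard_sdiff hts ht]; omega)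
  have ha : a ∈ s \ t := hst ▸ mem_insert a {b}
  have hb : b ∈ s \ t := hst ▸ mem_insert_of_mem a rfl
  exact ⟨a, b, hab, ha.2, hb.2, by rw [← hst, union_sdiff_cancel hts]⟩

section UniqueColors

variable {V α : Type*}

/-- By definition, the PCF condition of `IsPCFColoring` at `v` reads
`min h (G.neighborSet v).ncard ≤ (uniqueColors φ (G.neighborSet v)).ncard`. -/
def uniqueColors (φ : V → α) (N : Set V) : Set α :=
  {c | {n | n ∈ N ∧ φ n = c}.ncard = 1}

variable {φ ψ : V → α} {N A B : Set V} {a b c : V} {γ : α}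

theorem mem_uniqueColors :
    γ ∈ uniqueColors φ N ↔ ∃ n ∈ N, φ n = γ ∧ ∀ m ∈ N, φ m = γ → m = n := by
  simp only [uniqueColors, mem_ofPred_eq, ncard_eq_one, Set.ext_iff, mem_singleton_iff]
  constructor
  · rintro ⟨n, hn⟩
    obtain ⟨hnN, rfl⟩ := (hn n).2 rfl
    exact ⟨n, hnN, rfl, fun m hm he => (hn m).1 ⟨hm, he⟩⟩
  · rintro ⟨n, hnN, rfl, hn⟩
    exact ⟨n, fun m => ⟨fun ⟨hm, he⟩ => hn m hm he, by rintro rfl; exact ⟨hnN, rfl⟩⟩⟩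

theorem uniqueColors_subset_image : uniqueColors φ N ⊆ φ '' N := fun _ hγ => by
  obtain ⟨n, hn, rfl, -⟩ := mem_uniqueColors.1 hγ
  exact mem_image_of_mem φ hn

instance [Finite V] : Finite (uniqueColors φ N) :=
  Finite.Set.subset _ uniqueColors_subset_image

theorem uniqueColors_congr (h : EqOn φ ψ N) : uniqueColors φ N = uniqueColors ψ N := by
  have fiber : ∀ γ, {n | n ∈ N ∧ φ n = γ} = {n | n ∈ N ∧ ψ n = γ} := fun γ =>
    Set.ext fun n => and_congr_right fun hn => by rw [h hn]
  simp only [uniqueColors, fiber]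

theorem uniqueColors_eq_image_of_injOn (h : InjOn φ N) : uniqueColors φ N = φ '' N := by
  refine uniqueColors_subset_image.antisymm ?_
  rintro _ ⟨n, hn, rfl⟩
  exact mem_uniqueColors.2 ⟨n, hn, rfl, fun m hm he => h hm hn he⟩

theorem uniqueColors_singleton : uniqueColors φ {a} = {φ a} := by
  rw [uniqueColors_eq_image_of_injOn (injOn_singleton φ a), image_singleton]

theorem uniqueColors_union_sdiff_image :
    uniqueColors φ (A ∪ B) \ φ '' B = uniqueColors φ A \ φ '' B := by
  ext γ
  refine and_congr_left fun hγ => ?_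
  have fiber : {n | n ∈ A ∪ B ∧ φ n = γ} = {n | n ∈ A ∧ φ n = γ} :=
    Set.ext fun n => ⟨fun ⟨hn, he⟩ => ⟨hn.resolve_right fun hB => hγ ⟨n, hB, he⟩, he⟩,
      fun ⟨hn, he⟩ => ⟨Or.inl hn, he⟩⟩
  simp only [uniqueColors, mem_ofPred_eq, fiber]

theorem uniqueColors_subset_union (h : Disjoint (φ '' A) (φ '' B)) :
    uniqueColors φ A ⊆ uniqueColors φ (A ∪ B) := fun γ hγ => by
  have hγ' : γ ∈ uniqueColors φ A \ φ '' B :=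
    ⟨hγ, h.notMem_of_mem_left (uniqueColors_subset_image hγ)⟩
  rw [← uniqueColors_union_sdiff_image] at hγ'
  exact hγ'.1

theorem ncard_uniqueColors_add_le_of_disjoint [Finite V] (h : Disjoint (φ '' A) (φ '' B)) :
    (uniqueColors φ A).ncard + (uniqueColors φ B).ncard ≤ (uniqueColors φ (A ∪ B)).ncard := by
  rw [← ncard_union_eq (h.mono uniqueColors_subset_image uniqueColors_subset_image)]
  refine ncard_le_ncard (union_subset (uniqueColors_subset_union h) ?_)
  rw [union_comm]
  exact uniqueColors_subset_union h.symm

theorem ncard_uniqueColors_insert_le [Finite V] :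
    (uniqueColors φ (insert a N)).ncard ≤ (uniqueColors φ N).ncard + 1 := by
  have h := uniqueColors_union_sdiff_image (φ := φ) (A := N) (B := {a})
  rw [union_singleton, image_singleton] at h
  calc (uniqueColors φ (insert a N)).ncard
      ≤ (uniqueColors φ (insert a N) \ {φ a}).ncard + ({φ a} : Set α).ncard :=
        ncard_le_ncard_sdiff_add_ncard _ _
    _ ≤ (uniqueColors φ N).ncard + 1 := by
        rw [h, ncard_singleton]; exact Nat.add_le_add_right (ncard_le_ncard sdiff_subset) 1

theorem ncard_uniqueColors_le_insert [Finite V] :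
    (uniqueColors φ N).ncard ≤ (uniqueColors φ (insert a N)).ncard + 1 := by
  have h := uniqueColors_union_sdiff_image (φ := φ) (A := N) (B := {a})
  rw [union_singleton, image_singleton] at h
  calc (uniqueColors φ N).ncard
      ≤ (uniqueColors φ N \ {φ a}).ncard + ({φ a} : Set α).ncard :=
        ncard_le_ncard_sdiff_add_ncard _ _
    _ ≤ (uniqueColors φ (insert a N)).ncard + 1 := by
        rw [← h, ncard_singleton]; exact Nat.add_le_add_right (ncard_le_ncard sdiff_subset) 1

theorem ncard_uniqueColors_le_add_ncard_sdiff [Finite V] (h : A ⊆ B) :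
    (uniqueColors φ B).ncard ≤ (uniqueColors φ A).ncard + (B \ A).ncard := by
  have key (D : Set V) : (uniqueColors φ (A ∪ D)).ncard ≤ (uniqueColors φ A).ncard + D.ncard := by
    induction D, D.toFinite using Set.Finite.induction_on with
    | empty => simp
    | @insert d D hd _ ih =>
      rw [union_insert, ncard_insert_of_notMem hd]
      exact ncard_uniqueColors_insert_le.trans (by omega)
  simpa only [union_sdiff_cancel h] using key (B \ A)

theorem ncard_uniqueColors_triple [Finite V] (hab : φ a ≠ φ b) (hac : φ a ≠ φ c)
    (hbc : φ b ≠ φ c) : (uniqueColors φ {a, b, c}).ncard = 3 := by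
  have hinj : InjOn φ {a, b, c} := by
    rw [injOn_iff_pairwise_ne]
    simp [pairwise_insert, hab, hac, hbc, hab.symm, hac.symm, hbc.symm]
  rw [uniqueColors_eq_image_of_injOn hinj, image_insert_eq, image_insert_eq, image_singleton]
  exact ncard_eq_three.2 ⟨_, _, _, hab, hac, hbc, rfl⟩

theorem two_le_ncard_uniqueColors_insert_triple [Finite V] {d : V} (hbc : φ b ≠ φ c)
    (hbd : φ b ≠ φ d) (hcd : φ c ≠ φ d) : 2 ≤ (uniqueColors φ {a, b, c, d}).ncard := by
  have := ncard_uniqueColors_triple hbc hbd hcd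
  have := ncard_uniqueColors_le_insert (φ := φ) (N := {b, c, d}) (a := a)
  omega

theorem min_two_le_ncard_uniqueColors_insert [Finite V] {t : V} (hN : N.ncard ≤ 3)
    (hU : N.Nonempty → (uniqueColors φ N).Nonempty)
    (hfresh : (φ '' N).ncard ≤ 2 → φ t ∉ φ '' N) :
    min 2 (insert t N).ncard ≤ (uniqueColors φ (insert t N)).ncard := by
  rcases N.eq_empty_or_nonempty with rfl | hne
  · simp [uniqueColors_singleton]
  by_cases hsmall : (φ '' N).ncard ≤ 2
  · have hdisj : Disjoint (φ '' {t}) (φ '' N) := by simpa using hfresh hsmall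
    have h := ncard_uniqueColors_add_le_of_disjoint hdisj
    rw [singleton_union, uniqueColors_singleton, ncard_singleton] at h
    have := (hU hne).ncard_pos
    omega
  · have himage : (φ '' N).ncard = N.ncard := le_antisymm ncard_image_le (by omega)
    have h := ncard_uniqueColors_le_insert (φ := φ) (N := N) (a := t)
    rw [uniqueColors_eq_image_of_injOn (injOn_of_ncard_image_eq himage), himage] at h
    omega

end UniqueColors

namespace SimpleGraph

variable {V α : Type*} {G : SimpleGraph V} {S : Set V} {φ ψ : V → α} {w t : V}

theorem CliqueFree.not_adj_of_adj_of_adj (htf : G.CliqueFree 3) {a b c : V} (hba : G.Adj b a)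
    (hbc : G.Adj b c) : ¬G.Adj a c :=
  fun hac => G.isIndepSet_neighborSet_of_triangleFree htf b hba hbc (G.ne_of_adj hac) hac

theorem CliqueFree.adj_fiveCycle (htf : G.CliqueFree 3) {x y z u v z₁ s : V}
    (hxy : G.Adj x y) (hyz : G.Adj y z) (hzu : G.Adj z u) (huv : G.Adj u v) (hvx : G.Adj v x)
    (hzz₁ : G.Adj z z₁) (hxz₁ : ¬G.Adj x z₁) (hvz₁ : ¬G.Adj v z₁)
    (hs : s ∈ ({x, y, z, u, v, z₁} : Set V)) :
    (G.Adj y s → s ∈ ({x, z} : Set V)) ∧ (G.Adj u s → s ∈ ({z, v} : Set V)) ∧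
      (G.Adj z₁ s → s = z) := by
  have nyu : ¬G.Adj y u := htf.not_adj_of_adj_of_adj hyz.symm hzu
  have nyv : ¬G.Adj y v := htf.not_adj_of_adj_of_adj hxy hvx.symm
  have nyz₁ : ¬G.Adj y z₁ := htf.not_adj_of_adj_of_adj hyz.symm hzz₁
  have nux : ¬G.Adj u x := htf.not_adj_of_adj_of_adj huv.symm hvx
  have nuz₁ : ¬G.Adj u z₁ := htf.not_adj_of_adj_of_adj hzu hzz₁
  rcases hs with rfl | rfl | rfl | rfl | rfl | rfl
  · exact ⟨fun _ => Or.inl rfl, fun h => absurd h nux, fun h => absurd h.symm hxz₁⟩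
  · exact ⟨fun h => absurd h G.irrefl, fun h => absurd h.symm nyu, fun h => absurd h.symm nyz₁⟩
  · exact ⟨fun _ => Or.inr rfl, fun _ => Or.inl rfl, fun _ => rfl⟩
  · exact ⟨fun h => absurd h nyu, fun h => absurd h G.irrefl, fun h => absurd h.symm nuz₁⟩
  · exact ⟨fun h => absurd h nyv, fun _ => Or.inr rfl, fun h => absurd h.symm hvz₁⟩
  · exact ⟨fun h => absurd h nyz₁, fun h => absurd h nuz₁, fun h => absurd h G.irrefl⟩

theorem neighborSet_reduce_eq_of_disjoint (hw : w ∉ S) (h : Disjoint (G.neighborSet w) S) :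
    (G.reduce S).neighborSet w = G.neighborSet w := by
  ext n
  refine ⟨?_, fun hn => ⟨hw, h.notMem_of_mem_left hn, G.ne_of_adj hn, Or.inl hn⟩⟩
  rintro ⟨-, -, -, hn | ⟨s, hs, hws, -⟩⟩
  · exact hn
  · exact absurd hs (h.notMem_of_mem_left hws)

theorem neighborSet_sdiff_subset_neighborSet_reduce (hw : w ∉ S) :
    G.neighborSet w \ S ⊆ (G.reduce S).neighborSet w :=
  fun _ ⟨hn, hnS⟩ => ⟨hw, hnS, G.ne_of_adj hn, Or.inl hn⟩

theorem neighborSet_reduce_subset (hT : G.neighborSet w ∩ S = {t}) :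
    (G.reduce S).neighborSet w ⊆ (G.neighborSet w \ S) ∪ ((G.neighborSet t \ S) \ {w}) := by
  rintro n ⟨-, hnS, hne, hn | ⟨s, hs, hws, hsn⟩⟩
  · exact Or.inl ⟨hn, hnS⟩
  · obtain rfl : s = t := by rw [← mem_singleton_iff, ← hT]; exact ⟨hws, hs⟩
    exact Or.inr ⟨⟨hsn, hnS⟩, fun h => hne (mem_singleton_iff.1 h).symm⟩

theorem reduce_adj_of_mem_sdiff {n m : V} (ht : t ∈ S) (hn : n ∈ G.neighborSet t \ S)
    (hm : m ∈ G.neighborSet t \ S) (hnm : n ≠ m) : (G.reduce S).Adj n m :=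
  ⟨hn.2, hm.2, hnm, Or.inr ⟨t, ht, hn.1.symm, hm.1⟩⟩

/-- Apart from its outside neighbours, `w` sees in `G*S` at most the other outside neighbour of
`t`, which can cancel at most one unique colour. -/
theorem nonempty_uniqueColors_neighborSet_sdiff [Finite V] (hφ : (G.reduce S).IsPCFColoring 2 φ)
    (hw : w ∉ S) (hT : G.neighborSet w ∩ S = {t}) (ht : (G.neighborSet t \ S).ncard ≤ 2)
    (hO : (G.neighborSet w \ S).Nonempty) :
    (uniqueColors φ (G.neighborSet w \ S)).Nonempty := by
  set O := G.neighborSet w \ S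
  set N := (G.reduce S).neighborSet w
  have htw : w ∈ G.neighborSet t \ S := by
    have ht' : t ∈ G.neighborSet w ∩ S := hT ▸ rfl
    exact ⟨ht'.1.symm, hw⟩
  have hON : O ⊆ N := neighborSet_sdiff_subset_neighborSet_reduce hw
  have hextra : (N \ O).ncard ≤ 1 := by
    have hsub : N \ O ⊆ (G.neighborSet t \ S) \ {w} :=
      fun n hn => (neighborSet_reduce_subset hT hn.1).resolve_left hn.2
    have := ncard_le_ncard hsub
    have := ncard_sdiff_singleton_of_mem htw
    omega
  have hcard := ncard_sdiff_add_ncard_of_subset hON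
  have hpcf : min 2 N.ncard ≤ (uniqueColors φ N).ncard := hφ.2 w
  have hU := ncard_uniqueColors_le_add_ncard_sdiff (φ := φ) hON
  have := hO.ncard_pos
  rw [← ncard_pos]
  omega

theorem min_two_le_ncard_uniqueColors_of_disjoint (hφ : (G.reduce S).IsPCFColoring 2 φ)
    (hψ : ∀ n ∉ S, ψ n = φ n) (hw : w ∉ S) (h : Disjoint (G.neighborSet w) S) :
    min 2 (G.neighborSet w).ncard ≤ (uniqueColors ψ (G.neighborSet w)).ncard := by
  have hpcf : min 2 ((G.reduce S).neighborSet w).ncard ≤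
      (uniqueColors φ ((G.reduce S).neighborSet w)).ncard := hφ.2 w
  rwa [neighborSet_reduce_eq_of_disjoint hw h,
    ← uniqueColors_congr fun n hn => hψ n (h.notMem_of_mem_left hn)] at hpcf

theorem min_two_le_ncard_uniqueColors_of_notMem [Finite V]
    (hw4 : (G.neighborSet w).ncard ≤ 4) (hS : ∀ t ∈ S, (G.neighborSet t \ S).ncard ≤ 2)
    (hφ : (G.reduce S).IsPCFColoring 2 φ) (hψ : ∀ n ∉ S, ψ n = φ n) (hw : w ∉ S)
    (hfresh : ∀ t ∈ G.neighborSet w ∩ S,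
      (φ '' (G.neighborSet w \ S)).ncard ≤ 2 → ψ t ∉ φ '' (G.neighborSet w \ S))
    (hinj : InjOn ψ (G.neighborSet w ∩ S) ∨ 2 ≤ (φ '' (G.neighborSet w \ S)).ncard) :
    min 2 (G.neighborSet w).ncard ≤ (uniqueColors ψ (G.neighborSet w)).ncard := by
  set T := G.neighborSet w ∩ S
  set O := G.neighborSet w \ S
  have hTO : T ∪ O = G.neighborSet w := inter_union_sdiff _ _
  have hcard : T.ncard + O.ncard = (G.neighborSet w).ncard := by
    rw [← hTO, ncard_union_eq (disjoint_sdiff_inter.symm)]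
  have hOψ : EqOn ψ φ O := fun n hn => hψ n hn.2
  have himage : ψ '' O = φ '' O := image_congr hOψ
  have hUO : uniqueColors ψ O = uniqueColors φ O := uniqueColors_congr hOψ
  obtain hT | hT | hT : T.ncard = 0 ∨ T.ncard = 1 ∨ 2 ≤ T.ncard := by omega
  · exact min_two_le_ncard_uniqueColors_of_disjoint hφ hψ hw
      (disjoint_iff_inter_eq_empty.2 ((ncard_eq_zero).1 hT))
  · obtain ⟨t, hT⟩ := ncard_eq_one.1 hT
    have htS : t ∈ T := hT ▸ rfl
    rw [← hTO, hT, singleton_union]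
    refine min_two_le_ncard_uniqueColors_insert (by omega) (fun hO => ?_) (fun hsmall => ?_)
    · rw [hUO]
      exact nonempty_uniqueColors_neighborSet_sdiff hφ hw hT (hS t htS.2) hO
    · rw [himage] at hsmall ⊢
      exact hfresh t htS hsmall
  · have hsmall : (φ '' O).ncard ≤ 2 := le_trans ncard_image_le (by omega)
    have hdisj : Disjoint (ψ '' T) (ψ '' O) := by
      rw [himage, Set.disjoint_left]
      rintro _ ⟨t, ht, rfl⟩
      exact hfresh t ht hsmall
    have h := ncard_uniqueColors_add_le_of_disjoint hdisj
    rw [hTO] at h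
    rcases hinj with hinj | hrainbow
    · rw [uniqueColors_eq_image_of_injOn hinj, hinj.ncard_image] at h
      omega
    · have himageO : (φ '' O).ncard = O.ncard := le_antisymm ncard_image_le (by omega)
      rw [hUO, uniqueColors_eq_image_of_injOn (injOn_of_ncard_image_eq himageO)] at h
      omega

/-- The colours that a vertex of `S` next to `w` must avoid: when the outside neighbours of `w`
show at most two colours, repeating one of them could cancel a unique colour of `w`. -/
noncomputable def forbiddenColors (G : SimpleGraph V) (S : Set V) (φ : V → α) (w : V) :
    Set α :=
  if (φ '' (G.neighborSet w \ S)).ncard ≤ 2 then φ '' (G.neighborSet w \ S) else ∅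

theorem ncard_forbiddenColors_le : (G.forbiddenColors S φ w).ncard ≤ 2 := by
  unfold forbiddenColors
  split_ifs with h
  exacts [h, by simp]

theorem forbiddenColors_eq (h : (φ '' (G.neighborSet w \ S)).ncard ≤ 2) :
    G.forbiddenColors S φ w = φ '' (G.neighborSet w \ S) :=
  if_pos h

theorem isPCFColoring_of_reduce [Finite V] (hΔ : ∀ w, (G.neighborSet w).ncard ≤ 4)
    (hS : ∀ t ∈ S, (G.neighborSet t \ S).ncard ≤ 2) (hφ : (G.reduce S).IsPCFColoring 2 φ)
    (hψ : ∀ n ∉ S, ψ n = φ n) (hproper : ∀ t ∈ S, ∀ n, G.Adj t n → ψ t ≠ ψ n)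
    (hpcf : ∀ t ∈ S, min 2 (G.neighborSet t).ncard ≤ (uniqueColors ψ (G.neighborSet t)).ncard)
    (hfresh : ∀ t ∈ S, ∀ w ∈ G.neighborSet t \ S, ψ t ∉ G.forbiddenColors S φ w)
    (hinj : ∀ w ∉ S, InjOn ψ (G.neighborSet w ∩ S) ∨ 2 ≤ (φ '' (G.neighborSet w \ S)).ncard) :
    G.IsPCFColoring 2 ψ := by
  refine ⟨fun n m hnm => ?_, fun w => ?_⟩
  · by_cases hn : n ∈ S
    · exact hproper n hn m hnm
    by_cases hm : m ∈ S
    · exact (hproper m hm n hnm.symm).symm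
    rw [hψ n hn, hψ m hm]
    exact hφ.1 ⟨hn, hm, G.ne_of_adj hnm, Or.inl hnm⟩
  by_cases hw : w ∈ S
  · exact hpcf w hw
  refine min_two_le_ncard_uniqueColors_of_notMem (hΔ w) hS hφ hψ hw
    (fun t ht hsmall => ?_) (hinj w hw)
  rw [← forbiddenColors_eq hsmall]
  exact hfresh t ht.2 w ⟨ht.1.symm, hw⟩

end SimpleGraph

section FiveCycle

variable {V α : Type*}

/-- The colour constraints on `cx, cy, cz, cu, cv, cz₁`, the future colours of `x, y, z, u, v, z₁`,
in the greedy order `z₁, u, y, z, v, x` in which they are chosen; `φ` colours the outside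
neighbours, `A` gives their forbidden colours, and `Q` stands for "`v₁ ∼ z₁` and the outside
neighbours of `v₁` show at most one colour". -/
structure IsGoodExtension (φ : V → α) (A : V → Set α) (x₁ v₁ a b c d p q : V) (Q : Prop)
    (cx cy cz cu cv cz₁ : α) : Prop where
  cz₁_notMem : cz₁ ∉ ({φ p, φ q} ∪ A p ∪ A q : Set α)
  cu_notMem : cu ∉ ({φ c, φ d, φ v₁, cz₁} ∪ A c ∪ A d : Set α)
  cy_notMem : cy ∉ ({φ a, φ b, φ x₁, cu, cz₁} ∪ A a ∪ A b : Set α)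
  cz_notMem : cz ∉ ({cy, cu, cz₁, φ a, φ b, φ p, φ q} : Set α)
  cv_notMem : cv ∉ ({cu, cy, φ x₁, φ v₁, φ c, φ d} ∪ A v₁ : Set α)
  cv_ne_cz₁ : Q → cv ≠ cz₁
  cx_notMem : cx ∉ ({cy, cv, cu, cz₁, φ x₁, φ v₁} ∪ A x₁ : Set α)

theorem IsGoodExtension.congr {φ φ' : V → α} {A : V → Set α} {x₁ v₁ a b c d p q : V} {Q : Prop}
    {cx cy cz cu cv cz₁ : α} (hg : IsGoodExtension φ A x₁ v₁ a b c d p q Q cx cy cz cu cv cz₁)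
    (h : ∀ n ∈ ({x₁, v₁, a, b, c, d, p, q} : Set V), φ' n = φ n) :
    IsGoodExtension φ' A x₁ v₁ a b c d p q Q cx cy cz cu cv cz₁ := by
  obtain ⟨h₁, h₂, h₃, h₄, h₅, h₆, h₇⟩ := hg
  constructor <;>
    simpa only [h x₁ (by simp), h v₁ (by simp), h a (by simp), h b (by simp), h c (by simp),
      h d (by simp), h p (by simp), h q (by simp)]

theorem exists_isGoodExtension [Finite α] (hα : 9 ≤ Nat.card α) (φ : V → α) (A : V → Set α)
    (hA : ∀ w, (A w).ncard ≤ 2) (x₁ v₁ a b c d p q : V) (Q : Prop)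
    (hQ : Q → (A v₁).ncard ≤ 1) :
    ∃ cx cy cz cu cv cz₁, IsGoodExtension φ A x₁ v₁ a b c d p q Q cx cy cz cu cv cz₁ := by
  have := hA a; have := hA b; have := hA c; have := hA d
  have := hA p; have := hA q; have := hA x₁; have hAv₁ := hA v₁
  set Fy : Set α := {φ a, φ b, φ x₁} ∪ A a ∪ A b
  have hFy : Fy.ncard ≤ 7 := by grind [ncard_insert_le, ncard_singleton, ncard_union_le]
  -- `cz₁` is taken among the colours forbidden for `cy` when possible, to leave room for `cy`.
  obtain ⟨cz₁, hz₁, hz₁y⟩ := exists_notMem_and_mem_or_subset (E := Fy)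
    (F := {φ p, φ q} ∪ A p ∪ A q) (by grind [ncard_insert_le, ncard_singleton, ncard_union_le])
  obtain ⟨cu, hu⟩ := exists_notMem_of_ncard_lt (s := {φ c, φ d, φ v₁, cz₁} ∪ A c ∪ A d)
    (by grind [ncard_insert_le, ncard_singleton, ncard_union_le])
  obtain ⟨cy, hy⟩ := exists_notMem_of_ncard_lt (s := Fy ∪ {cu, cz₁}) (by
    rcases hz₁y with h | h
    · rw [union_insert, union_singleton, insert_eq_of_mem h]
      grind [ncard_insert_le]
    · have := ncard_le_ncard h
      grind [ncard_insert_le, ncard_singleton, ncard_union_le])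
  obtain ⟨cz, hz⟩ := exists_notMem_of_ncard_lt (s := {cy, cu, cz₁, φ a, φ b, φ p, φ q})
    (by grind [ncard_insert_le, ncard_singleton])
  obtain ⟨cv, hv, hvQ⟩ : ∃ cv, cv ∉ ({cu, cy, φ x₁, φ v₁, φ c, φ d} ∪ A v₁ : Set α) ∧
      (Q → cv ≠ cz₁) := by
    by_cases hq : Q
    · have := hQ hq
      obtain ⟨cv, hv⟩ := exists_notMem_of_ncard_lt
        (s := insert cz₁ ({cu, cy, φ x₁, φ v₁, φ c, φ d} ∪ A v₁))
        (by grind [ncard_insert_le, ncard_singleton, ncard_union_le])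
      exact ⟨cv, fun h => hv (mem_insert_of_mem _ h), fun _ e => hv (e ▸ mem_insert _ _)⟩
    · obtain ⟨cv, hv⟩ := exists_notMem_of_ncard_lt
        (s := {cu, cy, φ x₁, φ v₁, φ c, φ d} ∪ A v₁)
        (by grind [ncard_insert_le, ncard_singleton, ncard_union_le])
      exact ⟨cv, hv, fun h => absurd h hq⟩
  obtain ⟨cx, hx⟩ := exists_notMem_of_ncard_lt (s := {cy, cv, cu, cz₁, φ x₁, φ v₁} ∪ A x₁)
    (by grind [ncard_insert_le, ncard_singleton, ncard_union_le])
  refine ⟨cx, cy, cz, cu, cv, cz₁, ⟨hz₁, hu, fun h => hy ?_, hz, hv, hvQ, hx⟩⟩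
  simp only [Fy, mem_union, mem_insert_iff, mem_singleton_iff] at h ⊢
  tauto

structure FiveCycleConfig (G : SimpleGraph V) (S : Set V) (x y z u v x₁ z₁ v₁ a b c d p q : V) :
    Prop where
  S_eq : S = {x, y, z, u, v, z₁}
  nodup : [x, y, z, u, v, z₁].Nodup
  neighborSet_x : G.neighborSet x = {y, v, x₁}
  neighborSet_y : G.neighborSet y = {x, z, a, b}
  neighborSet_z : G.neighborSet z = {y, u, z₁}
  neighborSet_u : G.neighborSet u = {z, v, c, d}
  neighborSet_v : G.neighborSet v = {u, x, v₁}
  neighborSet_z₁ : G.neighborSet z₁ = {z, p, q}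
  disjoint : Disjoint ({x₁, v₁, a, b, c, d, p, q} : Set V) S
  a_ne_b : a ≠ b
  c_ne_d : c ≠ d
  p_ne_q : p ≠ q

namespace FiveCycleConfig

open SimpleGraph

variable {G : SimpleGraph V} {S : Set V} {x y z u v x₁ z₁ v₁ a b c d p q w : V}

theorem mem (hc : FiveCycleConfig G S x y z u v x₁ z₁ v₁ a b c d p q)
    (hw : w ∈ ({x, y, z, u, v, z₁} : Set V)) : w ∈ S :=
  hc.S_eq ▸ hw

theorem notMem (hc : FiveCycleConfig G S x y z u v x₁ z₁ v₁ a b c d p q)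
    (hw : w ∈ ({x₁, v₁, a, b, c, d, p, q} : Set V)) : w ∉ S :=
  hc.disjoint.notMem_of_mem_left hw

theorem mem_iff (hc : FiveCycleConfig G S x y z u v x₁ z₁ v₁ a b c d p q) :
    w ∈ S ↔ w = x ∨ w = y ∨ w = z ∨ w = u ∨ w = v ∨ w = z₁ := by
  rw [hc.S_eq]; rfl

theorem neighborSet_sdiff_x (hc : FiveCycleConfig G S x y z u v x₁ z₁ v₁ a b c d p q) :
    G.neighborSet x \ S = {x₁} := by
  rw [hc.neighborSet_x, insert_sdiff_of_mem _ (hc.mem (by simp)),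
    insert_sdiff_of_mem _ (hc.mem (by simp)),
    sdiff_eq_left.2 (disjoint_singleton_left.2 (hc.notMem (by simp)))]

theorem neighborSet_sdiff_y (hc : FiveCycleConfig G S x y z u v x₁ z₁ v₁ a b c d p q) :
    G.neighborSet y \ S = {a, b} := by
  rw [hc.neighborSet_y, insert_sdiff_of_mem _ (hc.mem (by simp)),
    insert_sdiff_of_mem _ (hc.mem (by simp)),
    insert_sdiff_of_notMem _ (hc.notMem (by simp)),
    sdiff_eq_left.2 (disjoint_singleton_left.2 (hc.notMem (by simp)))]

theorem neighborSet_sdiff_z (hc : FiveCycleConfig G S x y z u v x₁ z₁ v₁ a b c d p q) :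
    G.neighborSet z \ S = ∅ := by
  rw [hc.neighborSet_z, insert_sdiff_of_mem _ (hc.mem (by simp)),
    insert_sdiff_of_mem _ (hc.mem (by simp)),
    sdiff_eq_empty.2 (singleton_subset_iff.2 (hc.mem (by simp)))]

theorem neighborSet_sdiff_u (hc : FiveCycleConfig G S x y z u v x₁ z₁ v₁ a b c d p q) :
    G.neighborSet u \ S = {c, d} := by
  rw [hc.neighborSet_u, insert_sdiff_of_mem _ (hc.mem (by simp)),
    insert_sdiff_of_mem _ (hc.mem (by simp)),
    insert_sdiff_of_notMem _ (hc.notMem (by simp)),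
    sdiff_eq_left.2 (disjoint_singleton_left.2 (hc.notMem (by simp)))]

theorem neighborSet_sdiff_v (hc : FiveCycleConfig G S x y z u v x₁ z₁ v₁ a b c d p q) :
    G.neighborSet v \ S = {v₁} := by
  rw [hc.neighborSet_v, insert_sdiff_of_mem _ (hc.mem (by simp)),
    insert_sdiff_of_mem _ (hc.mem (by simp)),
    sdiff_eq_left.2 (disjoint_singleton_left.2 (hc.notMem (by simp)))]

theorem neighborSet_sdiff_z₁ (hc : FiveCycleConfig G S x y z u v x₁ z₁ v₁ a b c d p q) :
    G.neighborSet z₁ \ S = {p, q} := by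
  rw [hc.neighborSet_z₁, insert_sdiff_of_mem _ (hc.mem (by simp)),
    insert_sdiff_of_notMem _ (hc.notMem (by simp)),
    sdiff_eq_left.2 (disjoint_singleton_left.2 (hc.notMem (by simp)))]

theorem ncard_neighborSet_sdiff_le (hc : FiveCycleConfig G S x y z u v x₁ z₁ v₁ a b c d p q) :
    ∀ t ∈ S, (G.neighborSet t \ S).ncard ≤ 2 := by
  intro t ht
  rcases hc.mem_iff.1 ht with h | h | h | h | h | h <;> subst t
  · simp [hc.neighborSet_sdiff_x]
  · rw [hc.neighborSet_sdiff_y]; exact (ncard_insert_le _ _).trans (by simp)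
  · simp [hc.neighborSet_sdiff_z]
  · rw [hc.neighborSet_sdiff_u]; exact (ncard_insert_le _ _).trans (by simp)
  · simp [hc.neighborSet_sdiff_v]
  · rw [hc.neighborSet_sdiff_z₁]; exact (ncard_insert_le _ _).trans (by simp)

variable {φ ψ : V → α}

theorem apply_ne_of_reduce (hc : FiveCycleConfig G S x y z u v x₁ z₁ v₁ a b c d p q)
    (hφ : (G.reduce S).IsPCFColoring 2 φ) (hψ : ∀ n ∉ S, ψ n = φ n) :
    ψ a ≠ ψ b ∧ ψ c ≠ ψ d ∧ ψ p ≠ ψ q := by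
  rw [hψ a (hc.notMem (by simp)), hψ b (hc.notMem (by simp)), hψ c (hc.notMem (by simp)),
    hψ d (hc.notMem (by simp)), hψ p (hc.notMem (by simp)), hψ q (hc.notMem (by simp))]
  refine ⟨hφ.1 (reduce_adj_of_mem_sdiff (t := y) (hc.mem (by simp)) ?_ ?_ hc.a_ne_b),
    hφ.1 (reduce_adj_of_mem_sdiff (t := u) (hc.mem (by simp)) ?_ ?_ hc.c_ne_d),
    hφ.1 (reduce_adj_of_mem_sdiff (t := z₁) (hc.mem (by simp)) ?_ ?_ hc.p_ne_q)⟩ <;>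
  simp [hc.neighborSet_sdiff_y, hc.neighborSet_sdiff_u, hc.neighborSet_sdiff_z₁]

theorem apply_ne_of_adj (hc : FiveCycleConfig G S x y z u v x₁ z₁ v₁ a b c d p q)
    (hg : IsGoodExtension ψ (G.forbiddenColors S φ) x₁ v₁ a b c d p q
      (G.Adj v₁ z₁ ∧ (φ '' (G.neighborSet v₁ \ S)).ncard ≤ 1)
      (ψ x) (ψ y) (ψ z) (ψ u) (ψ v) (ψ z₁)) :
    ∀ t ∈ S, ∀ n, G.Adj t n → ψ t ≠ ψ n := by
  intro t ht n hn
  rw [← mem_neighborSet] at hn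
  rcases hc.mem_iff.1 ht with h | h | h | h | h | h <;> subst t
  · rw [hc.neighborSet_x] at hn
    rcases hn with h | h | h <;> subst n <;>
      exact (ne_of_mem_of_not_mem (by simp) hg.cx_notMem).symm
  · rw [hc.neighborSet_y] at hn
    rcases hn with h | h | h | h <;> subst n
    · exact ne_of_mem_of_not_mem (by simp) hg.cx_notMem
    · exact ne_of_mem_of_not_mem (by simp) hg.cz_notMem
    all_goals exact (ne_of_mem_of_not_mem (by simp) hg.cy_notMem).symm
  · rw [hc.neighborSet_z] at hn
    rcases hn with h | h | h <;> subst n <;>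
      exact (ne_of_mem_of_not_mem (by simp) hg.cz_notMem).symm
  · rw [hc.neighborSet_u] at hn
    rcases hn with h | h | h | h <;> subst n
    · exact ne_of_mem_of_not_mem (by simp) hg.cz_notMem
    · exact ne_of_mem_of_not_mem (by simp) hg.cv_notMem
    all_goals exact (ne_of_mem_of_not_mem (by simp) hg.cu_notMem).symm
  · rw [hc.neighborSet_v] at hn
    rcases hn with h | h | h <;> subst n
    · exact (ne_of_mem_of_not_mem (by simp) hg.cv_notMem).symm
    · exact ne_of_mem_of_not_mem (by simp) hg.cx_notMem
    · exact (ne_of_mem_of_not_mem (by simp) hg.cv_notMem).symm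
  · rw [hc.neighborSet_z₁] at hn
    rcases hn with h | h | h <;> subst n
    · exact ne_of_mem_of_not_mem (by simp) hg.cz_notMem
    all_goals exact (ne_of_mem_of_not_mem (by simp) hg.cz₁_notMem).symm

theorem min_two_le_ncard_uniqueColors [Finite V]
    (hc : FiveCycleConfig G S x y z u v x₁ z₁ v₁ a b c d p q)
    (hφ : (G.reduce S).IsPCFColoring 2 φ) (hψ : ∀ n ∉ S, ψ n = φ n)
    (hg : IsGoodExtension ψ (G.forbiddenColors S φ) x₁ v₁ a b c d p q
      (G.Adj v₁ z₁ ∧ (φ '' (G.neighborSet v₁ \ S)).ncard ≤ 1)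
      (ψ x) (ψ y) (ψ z) (ψ u) (ψ v) (ψ z₁)) :
    ∀ t ∈ S, min 2 (G.neighborSet t).ncard ≤ (uniqueColors ψ (G.neighborSet t)).ncard := by
  obtain ⟨hab, hcd, hpq⟩ := hc.apply_ne_of_reduce hφ hψ
  have two_le_triple {n₁ n₂ n₃ : V} (h₁₂ : ψ n₁ ≠ ψ n₂) (h₁₃ : ψ n₁ ≠ ψ n₃)
      (h₂₃ : ψ n₂ ≠ ψ n₃) : 2 ≤ (uniqueColors ψ {n₁, n₂, n₃}).ncard :=
    le_of_le_of_eq (by norm_num) (ncard_uniqueColors_triple h₁₂ h₁₃ h₂₃).symm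
  intro t ht
  refine (min_le_left _ _).trans ?_
  rcases hc.mem_iff.1 ht with h | h | h | h | h | h <;> subst t
  · rw [hc.neighborSet_x]
    exact two_le_triple (ne_of_mem_of_not_mem (by simp) hg.cv_notMem)
      (ne_of_mem_of_not_mem (by simp) hg.cy_notMem).symm
      (ne_of_mem_of_not_mem (by simp) hg.cv_notMem).symm
  · rw [hc.neighborSet_y]
    exact two_le_ncard_uniqueColors_insert_triple
      (ne_of_mem_of_not_mem (by simp) hg.cz_notMem).symm
      (ne_of_mem_of_not_mem (by simp) hg.cz_notMem).symm hab
  · rw [hc.neighborSet_z]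
    exact two_le_triple (ne_of_mem_of_not_mem (by simp) hg.cy_notMem).symm
      (ne_of_mem_of_not_mem (by simp) hg.cy_notMem).symm
      (ne_of_mem_of_not_mem (by simp) hg.cu_notMem).symm
  · rw [hc.neighborSet_u]
    exact two_le_ncard_uniqueColors_insert_triple
      (ne_of_mem_of_not_mem (by simp) hg.cv_notMem).symm
      (ne_of_mem_of_not_mem (by simp) hg.cv_notMem).symm hcd
  · rw [hc.neighborSet_v]
    exact two_le_triple (ne_of_mem_of_not_mem (by simp) hg.cx_notMem)
      (ne_of_mem_of_not_mem (by simp) hg.cu_notMem).symm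
      (ne_of_mem_of_not_mem (by simp) hg.cx_notMem).symm
  · rw [hc.neighborSet_z₁]
    exact two_le_triple (ne_of_mem_of_not_mem (by simp) hg.cz_notMem).symm
      (ne_of_mem_of_not_mem (by simp) hg.cz_notMem).symm hpq

theorem notMem_forbiddenColors (hc : FiveCycleConfig G S x y z u v x₁ z₁ v₁ a b c d p q)
    (hg : IsGoodExtension ψ (G.forbiddenColors S φ) x₁ v₁ a b c d p q
      (G.Adj v₁ z₁ ∧ (φ '' (G.neighborSet v₁ \ S)).ncard ≤ 1)
      (ψ x) (ψ y) (ψ z) (ψ u) (ψ v) (ψ z₁)) :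
    ∀ t ∈ S, ∀ w ∈ G.neighborSet t \ S, ψ t ∉ G.forbiddenColors S φ w := by
  intro t ht w hw
  rcases hc.mem_iff.1 ht with h | h | h | h | h | h <;> subst t
  · obtain rfl : w = x₁ := by rw [← mem_singleton_iff, ← hc.neighborSet_sdiff_x]; exact hw
    exact fun h => hg.cx_notMem (Or.inr h)
  · rcases hc.neighborSet_sdiff_y ▸ hw with rfl | rfl
    · exact fun h => hg.cy_notMem (Or.inl (Or.inr h))
    · exact fun h => hg.cy_notMem (Or.inr h)
  · exact absurd (hc.neighborSet_sdiff_z ▸ hw) (notMem_empty w)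
  · rcases hc.neighborSet_sdiff_u ▸ hw with rfl | rfl
    · exact fun h => hg.cu_notMem (Or.inl (Or.inr h))
    · exact fun h => hg.cu_notMem (Or.inr h)
  · obtain rfl : w = v₁ := by rw [← mem_singleton_iff, ← hc.neighborSet_sdiff_v]; exact hw
    exact fun h => hg.cv_notMem (Or.inr h)
  · rcases hc.neighborSet_sdiff_z₁ ▸ hw with rfl | rfl
    · exact fun h => hg.cz₁_notMem (Or.inl (Or.inr h))
    · exact fun h => hg.cz₁_notMem (Or.inr h)

theorem injOn_inter_or (hc : FiveCycleConfig G S x y z u v x₁ z₁ v₁ a b c d p q)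
    (hg : IsGoodExtension ψ (G.forbiddenColors S φ) x₁ v₁ a b c d p q
      (G.Adj v₁ z₁ ∧ (φ '' (G.neighborSet v₁ \ S)).ncard ≤ 1)
      (ψ x) (ψ y) (ψ z) (ψ u) (ψ v) (ψ z₁)) :
    ∀ w ∉ S, InjOn ψ (G.neighborSet w ∩ S) ∨ 2 ≤ (φ '' (G.neighborSet w \ S)).ncard := by
  intro w hw
  refine or_iff_not_imp_right.2 fun hsmall => ?_
  have hxyuv : InjOn ψ {x, y, u, v} := by
    have hxy : ψ x ≠ ψ y := (ne_of_mem_of_not_mem (by simp) hg.cx_notMem).symm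
    have hxu : ψ x ≠ ψ u := (ne_of_mem_of_not_mem (by simp) hg.cx_notMem).symm
    have hxv : ψ x ≠ ψ v := (ne_of_mem_of_not_mem (by simp) hg.cx_notMem).symm
    have hyu : ψ y ≠ ψ u := (ne_of_mem_of_not_mem (by simp) hg.cy_notMem).symm
    have hyv : ψ y ≠ ψ v := ne_of_mem_of_not_mem (by simp) hg.cv_notMem
    have huv : ψ u ≠ ψ v := ne_of_mem_of_not_mem (by simp) hg.cv_notMem
    rw [injOn_iff_pairwise_ne]
    simp [pairwise_insert, hxy, hxu, hxv, hyu, hyv, huv, hxy.symm, hxu.symm, hxv.symm, hyu.symm,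
      hyv.symm, huv.symm]
  -- only `v` may share the colour of `z₁`, and `w` is then `v₁`, which sees two outside colours
  have key : ∀ t ∈ G.neighborSet w ∩ S, t ≠ z₁ →
      t ∈ ({x, y, u, v} : Set V) ∧ (G.Adj w z₁ → ψ t ≠ ψ z₁) := by
    rintro t ⟨ht, htS⟩ hne
    have hwt : w ∈ G.neighborSet t \ S := ⟨ht.symm, hw⟩
    rcases hc.mem_iff.1 htS with h | h | h | h | h | h <;> subst t
    · exact ⟨by simp, fun _ => (ne_of_mem_of_not_mem (by simp) hg.cx_notMem).symm⟩
    · exact ⟨by simp, fun _ => (ne_of_mem_of_not_mem (by simp) hg.cy_notMem).symm⟩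
    · exact absurd (hc.neighborSet_sdiff_z ▸ hwt) (notMem_empty w)
    · exact ⟨by simp, fun _ => (ne_of_mem_of_not_mem (by simp) hg.cu_notMem).symm⟩
    · obtain rfl : w = v₁ := by rw [← mem_singleton_iff, ← hc.neighborSet_sdiff_v]; exact hwt
      exact ⟨by simp, fun hwz₁ => hg.cv_ne_cz₁ ⟨hwz₁, by omega⟩⟩
    · exact absurd rfl hne
  intro t ht t' ht' he
  by_cases htz₁ : t = z₁
  · subst t
    by_contra hne
    exact (key t' ht' (Ne.symm hne)).2 ht.1 he.symm
  by_cases ht'z₁ : t' = z₁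
  · subst t'
    exact absurd he ((key t ht htz₁).2 ht'.1)
  exact hxyuv (key t ht htz₁).1 (key t' ht' ht'z₁).1 he

theorem exists_extension (hc : FiveCycleConfig G S x y z u v x₁ z₁ v₁ a b c d p q)
    (φ : V → α) (cx cy cz cu cv cz₁ : α) :
    ∃ ψ : V → α, ψ x = cx ∧ ψ y = cy ∧ ψ z = cz ∧ ψ u = cu ∧ ψ v = cv ∧ ψ z₁ = cz₁ ∧
      ∀ n ∉ S, ψ n = φ n := by
  classical
  have hd := hc.nodup
  simp only [List.nodup_cons, List.mem_cons, List.not_mem_nil, not_or, or_false] at hd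
  obtain ⟨⟨hxy, hxz, hxu, hxv, hxz₁⟩, ⟨hyz, hyu, hyv, hyz₁⟩, ⟨hzu, hzv, hzz₁⟩, ⟨huv, huz₁⟩,
    hvz₁, -⟩ := hd
  refine ⟨fun n => if n = x then cx else if n = y then cy else if n = z then cz else
    if n = u then cu else if n = v then cv else if n = z₁ then cz₁ else φ n,
    by simp, by simp [Ne.symm hxy], by simp [Ne.symm hxz, Ne.symm hyz],
    by simp [Ne.symm hxu, Ne.symm hyu, Ne.symm hzu],
    by simp [Ne.symm hxv, Ne.symm hyv, Ne.symm hzv, Ne.symm huv],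
    by simp [Ne.symm hxz₁, Ne.symm hyz₁, Ne.symm hzz₁, Ne.symm huz₁, Ne.symm hvz₁], fun n hn => ?_⟩
  simp only [hc.mem_iff, not_or] at hn
  simp [hn]

theorem hasPCFColoring [Finite V] (hc : FiveCycleConfig G S x y z u v x₁ z₁ v₁ a b c d p q)
    (hΔ : ∀ w, (G.neighborSet w).ncard ≤ 4) {k : ℕ} (hk : 9 ≤ k) {φ : V → Fin k}
    (hφ : (G.reduce S).IsPCFColoring 2 φ) : G.HasPCFColoring 2 k := by
  obtain ⟨cx, cy, cz, cu, cv, cz₁, hg⟩ := exists_isGoodExtension (by simpa using hk) φ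
    (G.forbiddenColors S φ) (fun _ => ncard_forbiddenColors_le) x₁ v₁ a b c d p q
    (G.Adj v₁ z₁ ∧ (φ '' (G.neighborSet v₁ \ S)).ncard ≤ 1)
    fun hQ => (forbiddenColors_eq (G := G) (S := S) (φ := φ) (w := v₁) (by omega)) ▸ hQ.2
  obtain ⟨ψ, rfl, rfl, rfl, rfl, rfl, rfl, hψ⟩ := hc.exists_extension φ cx cy cz cu cv cz₁
  replace hg := hg.congr fun n hn => hψ n (hc.notMem hn)
  exact ⟨ψ, isPCFColoring_of_reduce hΔ hc.ncard_neighborSet_sdiff_le hφ hψ (hc.apply_ne_of_adj hg)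
    (hc.min_two_le_ncard_uniqueColors hφ hψ hg) (hc.notMem_forbiddenColors hg)
    (hc.injOn_inter_or hg)⟩

end FiveCycleConfig

theorem exists_fiveCycleConfig [Finite V] {G : SimpleGraph V} (htf : G.CliqueFree 3)
    {x y z u v x₁ z₁ v₁ : V} (hxy : G.Adj x y) (hyz : G.Adj y z) (hzu : G.Adj z u)
    (huv : G.Adj u v) (hvx : G.Adj v x) (hdist : List.Pairwise (· ≠ ·) [x, y, z, u, v])
    (hdx : (G.neighborSet x).ncard = 3) (hdz : (G.neighborSet z).ncard = 3)
    (hdv : (G.neighborSet v).ncard = 3) (hdy : (G.neighborSet y).ncard = 4)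
    (hdu : (G.neighborSet u).ncard = 4) (hdz₁ : (G.neighborSet z₁).ncard = 3)
    (hxx₁ : G.Adj x x₁) (hzz₁ : G.Adj z z₁) (hvv₁ : G.Adj v v₁)
    (hx₁ : x₁ ∉ ({x, y, z, u, v} : Set V)) (hz₁ : z₁ ∉ ({x, y, z, u, v} : Set V))
    (hv₁ : v₁ ∉ ({x, y, z, u, v} : Set V)) (hx₁z₁ : x₁ ≠ z₁) (hv₁z₁ : v₁ ≠ z₁) :
    ∃ a b c d p q, FiveCycleConfig G {x, y, z, u, v, z₁} x y z u v x₁ z₁ v₁ a b c d p q := by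
  simp only [List.pairwise_cons, List.mem_cons, List.not_mem_nil, or_false, forall_eq_or_imp,
    forall_eq, IsEmpty.forall_iff, List.Pairwise.nil, and_true] at hdist
  obtain ⟨⟨hxy', hxz, hxu, hxv⟩, ⟨hyz', hyu, hyv⟩, ⟨hzu', hzv⟩, huv', -⟩ := hdist
  simp only [mem_insert_iff, mem_singleton_iff, not_or] at hx₁ hz₁ hv₁
  obtain ⟨hz₁x, hz₁y, hz₁z, hz₁u, hz₁v⟩ := hz₁
  have hNx : G.neighborSet x = {y, v, x₁} := eq_triple_of_ncard_eq_three hdx hxy hvx.symm hxx₁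
    hyv (Ne.symm hx₁.2.1) (Ne.symm hx₁.2.2.2.2)
  have hNz : G.neighborSet z = {y, u, z₁} := eq_triple_of_ncard_eq_three hdz hyz.symm hzu hzz₁
    hyu (Ne.symm hz₁y) (Ne.symm hz₁u)
  have hNv : G.neighborSet v = {u, x, v₁} := eq_triple_of_ncard_eq_three hdv huv.symm hvx hvv₁
    (Ne.symm hxu) (Ne.symm hv₁.2.2.2.1) (Ne.symm hv₁.1)
  obtain ⟨a, b, hab, ha, hb, hNy⟩ := exists_eq_union_pair_of_ncard_eq (s := G.neighborSet y)
    (t := {x, z}) (by rintro _ (rfl | rfl); exacts [hxy.symm, hyz]) (toFinite _)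
    (by rw [hdy, ncard_pair hxz])
  obtain ⟨c, d, hcd, hc, hd, hNu⟩ := exists_eq_union_pair_of_ncard_eq (s := G.neighborSet u)
    (t := {z, v}) (by rintro _ (rfl | rfl); exacts [hzu.symm, huv]) (toFinite _)
    (by rw [hdu, ncard_pair hzv])
  obtain ⟨p, q, hpq, hp, hq, hNz₁⟩ := exists_eq_union_pair_of_ncard_eq (s := G.neighborSet z₁)
    (t := {z}) (by rintro _ rfl; exact hzz₁.symm) (toFinite _) (by rw [hdz₁, ncard_singleton])
  rw [insert_union, singleton_union] at hNy hNu
  rw [singleton_union] at hNz₁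
  have hS {s : V} := htf.adj_fiveCycle (s := s) hxy hyz hzu huv hvx hzz₁
    (by rw [← SimpleGraph.mem_neighborSet, hNx]; simp [hz₁y, hz₁v, Ne.symm hx₁z₁])
    (by rw [← SimpleGraph.mem_neighborSet, hNv]; simp [hz₁u, hz₁x, Ne.symm hv₁z₁])
  refine ⟨a, b, c, d, p, q, rfl, ?_, hNx, hNy, hNz, hNu, hNv, hNz₁, ?_, hab, hcd, hpq⟩
  · simp only [List.nodup_cons, List.mem_cons, List.not_mem_nil, or_false, not_or,
      List.nodup_nil, not_false_eq_true, and_true]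
    exact ⟨⟨hxy', hxz, hxu, hxv, Ne.symm hz₁x⟩, ⟨hyz', hyu, hyv, Ne.symm hz₁y⟩,
      ⟨hzu', hzv, Ne.symm hz₁z⟩, ⟨huv', Ne.symm hz₁u⟩, Ne.symm hz₁v⟩
  rw [Set.disjoint_left]
  rintro w (rfl | rfl | rfl | rfl | rfl | rfl | rfl | rfl) hwS
  · rcases hwS with h | h | h | h | h | h
    exacts [hx₁.1 h, hx₁.2.1 h, hx₁.2.2.1 h, hx₁.2.2.2.1 h, hx₁.2.2.2.2 h, hx₁z₁ h]
  · rcases hwS with h | h | h | h | h | h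
    exacts [hv₁.1 h, hv₁.2.1 h, hv₁.2.2.1 h, hv₁.2.2.2.1 h, hv₁.2.2.2.2 h, hv₁z₁ h]
  · exact ha ((hS hwS).1 (by rw [← SimpleGraph.mem_neighborSet, hNy]; simp))
  · exact hb ((hS hwS).1 (by rw [← SimpleGraph.mem_neighborSet, hNy]; simp))
  · exact hc ((hS hwS).2.1 (by rw [← SimpleGraph.mem_neighborSet, hNu]; simp))
  · exact hd ((hS hwS).2.1 (by rw [← SimpleGraph.mem_neighborSet, hNu]; simp))
  · exact hp ((hS hwS).2.2 (by rw [← SimpleGraph.mem_neighborSet, hNz₁]; simp))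
  · exact hq ((hS hwS).2.2 (by rw [← SimpleGraph.mem_neighborSet, hNz₁]; simp))

end FiveCycle

theorem reduce_five_cycle_pendant_three_vertex_general {V : Type*} [Fintype V]
    (G : SimpleGraph V)
    (hΔ : ∀ a : V, {b | G.Adj a b}.ncard ≤ 4)
    (htf : G.CliqueFree 3)
    (x y z u v x₁ z₁ v₁ : V)
    (hxy : G.Adj x y) (hyz : G.Adj y z) (hzu : G.Adj z u)
    (huv : G.Adj u v) (hvx : G.Adj v x)
    (hdist : List.Pairwise (· ≠ ·) [x, y, z, u, v])
    (hdx : {a | G.Adj x a}.ncard = 3)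
    (hdz : {a | G.Adj z a}.ncard = 3)
    (hdv : {a | G.Adj v a}.ncard = 3)
    (hdy : {a | G.Adj y a}.ncard = 4)
    (hdu : {a | G.Adj u a}.ncard = 4)
    (hxx₁ : G.Adj x x₁) (hzz₁ : G.Adj z z₁) (hvv₁ : G.Adj v v₁)
    (hx₁ : x₁ ∉ ({x, y, z, u, v} : Set V))
    (hz₁ : z₁ ∉ ({x, y, z, u, v} : Set V))
    (hv₁ : v₁ ∉ ({x, y, z, u, v} : Set V))
    (hdx₁ : {a | G.Adj x₁ a}.ncard = 4)
    (hdv₁ : {a | G.Adj v₁ a}.ncard = 4)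
    (hdz₁ : {a | G.Adj z₁ a}.ncard = 3)
    (h : (G.reduce {x, y, z, u, v, z₁}).HasPCFColoring 2 9) :
    G.HasPCFColoring 2 9 := by
  obtain ⟨φ, hφ⟩ := h
  have hx₁z₁ : x₁ ≠ z₁ := fun h => by rw [h, hdz₁] at hdx₁; omega
  have hv₁z₁ : v₁ ≠ z₁ := fun h => by rw [h, hdz₁] at hdv₁; omega
  obtain ⟨a, b, c, d, p, q, hc⟩ := exists_fiveCycleConfig htf hxy hyz hzu huv hvx hdist hdx hdz hdv
    hdy hdu hdz₁ hxx₁ hzz₁ hvv₁ hx₁ hz₁ hv₁ hx₁z₁ hv₁z₁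
  exact hc.hasPCFColoring hΔ le_rfl hφ

theorem reduce_five_cycle_pendant_three_vertex {V : Type*} [Fintype V]
    (G : SimpleGraph V)
    (hΔ : ∀ a : V, {b | G.Adj a b}.ncard ≤ 4)
    (htf : G.CliqueFree 3)
    (x y z u v x₁ z₁ v₁ : V)
    (hxy : G.Adj x y) (hyz : G.Adj y z) (hzu : G.Adj z u)
    (huv : G.Adj u v) (hvx : G.Adj v x)
    (hdist : List.Pairwise (· ≠ ·) [x, y, z, u, v])
    (hdx : {a | G.Adj x a}.ncard = 3)
    (hdz : {a | G.Adj z a}.ncard = 3)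
    (hdv : {a | G.Adj v a}.ncard = 3)
    (hdy : {a | G.Adj y a}.ncard = 4)
    (hdu : {a | G.Adj u a}.ncard = 4)
    (hxx₁ : G.Adj x x₁) (hzz₁ : G.Adj z z₁) (hvv₁ : G.Adj v v₁)
    (hx₁ : x₁ ∉ ({x, y, z, u, v} : Set V))
    (hz₁ : z₁ ∉ ({x, y, z, u, v} : Set V))
    (hv₁ : v₁ ∉ ({x, y, z, u, v} : Set V))
    (hdx₁ : {a | G.Adj x₁ a}.ncard = 4)
    (hdv₁ : {a | G.Adj v₁ a}.ncard = 4)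
    (hx₁v₁ : x₁ ≠ v₁)
    (hdz₁ : {a | G.Adj z₁ a}.ncard = 3)
    (h : (G.reduce {x, y, z, u, v, z₁}).HasPCFColoring 2 9) :
    G.HasPCFColoring 2 9 :=
  reduce_five_cycle_pendant_three_vertex_general G hΔ htf x y z u v x₁ z₁ v₁ hxy hyz hzu huv hvx
    hdist hdx hdz hdv hdy hdu hxx₁ hzz₁ hvv₁ hx₁ hz₁ hv₁ hdx₁ hdv₁ hdz₁ h
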